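/- arXiv:math/0203080 — 2 statements merged into one kernel-verified Lean document; each statement's English description precedes it below -/
import Mathlib

section
/- Let 0 ≤ p_{1,M} ≤ ⋯ ≤ p_{M,M}, M = km, q_{i,M} = Σ_{j=(i−1)k+1}^{ik} p_{j,M}, F_M(x) = (1/M)Σ_{j=1}^M 1[M p_{j,M} ≤ x], F_m(x) = (1/m)Σ_{i=1}^m 1[m q_{i,M} ≤ x]. Then |F_M(x) − F_m(x)| ≤ 2k/M = 2/m. -/
open Finset

lemma filter_mono_eq_range (n : ℕ) (f : ℕ → ℝ) (x : ℝ)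
    (hmono : ∀ i j, i ≤ j → j < n → f i ≤ f j) :
    (range n).filter (fun j => f j ≤ x) =
      range (((range n).filter (fun j => f j ≤ x)).card) := by
  set S := (range n).filter (fun j => f j ≤ x) with hS
  have hsub : range S.card ⊆ S := by
    intro a ha
    rw [mem_range] at ha
    by_contra haS
    have hSsub : S ⊆ range a := by
      intro j hj
      rw [mem_range]
      by_contra hja
      push_neg at hja
      have hjn : j < n := mem_range.mp (mem_filter.mp hj).1
      have hfj : f j ≤ x := (mem_filter.mp hj).2
      have : a ∈ S := by
        rw [hS, mem_filter, mem_range]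
        exact ⟨lt_of_le_of_lt hja hjn, le_trans (hmono a j hja hjn) hfj⟩
      exact haS this
    have := card_le_card hSsub
    simp [card_range] at this
    omega
  exact (eq_of_subset_of_card_le hsub (by simp)).symm

/-- For ordered cell probabilities grouped into `m` consecutive groups of size `k`
(`M = km`), the structural distribution functions of the original and grouped
probabilities differ by at most `2/m`:
`|F_M(x) − F_m(x)| ≤ 2k/M = 2/m`. -/
theorem structural_df_grouping_bound
    (k m M : ℕ) (hk : 0 < k) (hm : 0 < m) (hM : M = k * m)
    (p : ℕ → ℝ) (hp0 : ∀ j, 0 ≤ p j)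
    (hsorted : ∀ i j, i ≤ j → j < M → p i ≤ p j)
    (hsum : ∑ j ∈ range M, p j = 1) (x : ℝ) :
    |(1 / (M : ℝ)) * ∑ j ∈ range M, (if (M : ℝ) * p j ≤ x then (1 : ℝ) else 0) -
      (1 / (m : ℝ)) * ∑ i ∈ range m,
        (if (m : ℝ) * ∑ j ∈ Ico (i * k) ((i + 1) * k), p j ≤ x then (1 : ℝ) else 0)|
      ≤ 2 * k / M := by
  have hM0 : 0 < M := hM ▸ Nat.mul_pos hk hm
  have hMk : M = m * k := by rw [hM]; ring
  set q : ℕ → ℝ := fun i => ∑ j ∈ Ico (i * k) ((i + 1) * k), p j with hq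
  have hcard : ∀ i : ℕ, (Ico (i * k) ((i + 1) * k)).card = k := by
    intro i
    have e1 : (i + 1) * k = i * k + k := by ring
    rw [Nat.card_Ico, e1]; omega
  have hqlow : ∀ i < m, (k : ℝ) * p (i * k) ≤ q i := by
    intro i hi
    have e1 : (i + 1) * k = i * k + k := by ring
    have hmk : (i + 1) * k ≤ m * k := Nat.mul_le_mul_right k (by omega)
    have h := Finset.card_nsmul_le_sum (Ico (i * k) ((i + 1) * k)) p (p (i * k))
      (fun j hj => by
        rw [mem_Ico] at hj
        exact hsorted _ _ hj.1 (by omega))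
    rw [hcard i] at h
    simpa [nsmul_eq_mul] using h
  have hqhigh : ∀ i < m, q i ≤ (k : ℝ) * p ((i + 1) * k - 1) := by
    intro i hi
    have e1 : (i + 1) * k = i * k + k := by ring
    have hmk : (i + 1) * k ≤ m * k := Nat.mul_le_mul_right k (by omega)
    have h := Finset.sum_le_card_nsmul (Ico (i * k) ((i + 1) * k)) p (p ((i + 1) * k - 1))
      (fun j hj => by
        rw [mem_Ico] at hj
        exact hsorted _ _ (by omega) (by omega))
    rw [hcard i] at h
    simpa [nsmul_eq_mul] using h
  have hqmono : ∀ i j, i ≤ j → j < m → q i ≤ q j := by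
    intro i j hij hjm
    rcases eq_or_lt_of_le hij with rfl | hlt
    · exact le_refl _
    · have him : i < m := lt_trans hlt hjm
      have h1 := hqhigh i him
      have h2 := hqlow j hjm
      have h3 : p ((i + 1) * k - 1) ≤ p (j * k) := by
        have h4 : (i + 1) * k ≤ j * k := Nat.mul_le_mul_right k (by omega)
        have h5 : (j + 1) * k ≤ m * k := Nat.mul_le_mul_right k (by omega)
        have e1 : (i + 1) * k = i * k + k := by ring
        have e2 : (j + 1) * k = j * k + k := by ring
        exact hsorted _ _ (by omega) (by omega)
      have h6 : (k : ℝ) * p ((i + 1) * k - 1) ≤ (k : ℝ) * p (j * k) :=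
        mul_le_mul_of_nonneg_left h3 (by positivity)
      linarith
  set S := (range M).filter (fun j => (M : ℝ) * p j ≤ x) with hSdef
  set T := (range m).filter (fun i => (m : ℝ) * q i ≤ x) with hTdef
  set A := S.card with hA
  set B := T.card with hB
  have hSsum : ∑ j ∈ range M, (if (M : ℝ) * p j ≤ x then (1 : ℝ) else 0) = A := by
    rw [hA, hSdef, Finset.sum_boole]
  have hTsum : ∑ i ∈ range m, (if (m : ℝ) * q i ≤ x then (1 : ℝ) else 0) = B := by
    rw [hB, hTdef, Finset.sum_boole]
  have hSeq : S = range A := by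
    rw [hA, hSdef]
    exact filter_mono_eq_range M (fun j => (M : ℝ) * p j) x
      (fun i j hij hjM => mul_le_mul_of_nonneg_left (hsorted i j hij hjM) (by positivity))
  have hTeq : T = range B := by
    rw [hB, hTdef]
    exact filter_mono_eq_range m (fun i => (m : ℝ) * q i) x
      (fun i j hij hjm => mul_le_mul_of_nonneg_left (hqmono i j hij hjm) (by positivity))
  have hMr : (M : ℝ) = (k : ℝ) * m := by rw [hM]; push_cast; ring
  have hAM : A ≤ M := by
    rw [hA, hSdef]
    exact (card_filter_le _ _).trans (by simp)
  -- kB ≤ A + k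
  have hkBA : k * B ≤ A + k := by
    rcases Nat.eq_zero_or_pos B with hB0 | hB1
    · simp [hB0]
    · obtain ⟨b, hb⟩ : ∃ b, B = b + 1 := ⟨B - 1, by omega⟩
      have hiT : b ∈ T := by rw [hTeq, mem_range]; omega
      rw [hTdef, mem_filter, mem_range] at hiT
      have hbm : b < m := hiT.1
      have hmem : b * k ∈ S := by
        rw [hSdef, mem_filter, mem_range]
        have e1 : (b + 1) * k = b * k + k := by ring
        have hmk : (b + 1) * k ≤ m * k := Nat.mul_le_mul_right k (by omega)
        refine ⟨by omega, ?_⟩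
        have h1 := hqlow b hbm
        have h2 : (M : ℝ) * p (b * k) = (m : ℝ) * ((k : ℝ) * p (b * k)) := by
          rw [hMr]; ring
        rw [h2]
        calc (m : ℝ) * ((k : ℝ) * p (b * k)) ≤ (m : ℝ) * q b :=
              mul_le_mul_of_nonneg_left h1 (by positivity)
          _ ≤ x := hiT.2
      rw [hSeq, mem_range] at hmem
      have e2 : k * (b + 1) = b * k + k := by ring
      rw [hb]
      omega
  -- A ≤ kB + k
  have hAkB : A ≤ k * B + k := by
    by_contra hcon
    push_neg at hcon
    have hBm : B < m := by
      have h1 : k * (B + 1) < k * m := by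
        calc k * (B + 1) = k * B + k := by ring
          _ < A := hcon
          _ ≤ M := hAM
          _ = k * m := hM
      have h2 := lt_of_mul_lt_mul_left h1 (Nat.zero_le k)
      omega
    have hjS : (B + 1) * k - 1 ∈ S := by
      rw [hSeq, mem_range]
      have e1 : (B + 1) * k = k * B + k := by ring
      omega
    rw [hSdef, mem_filter] at hjS
    have hBT : B ∈ T := by
      rw [hTdef, mem_filter, mem_range]
      refine ⟨hBm, ?_⟩
      have h1 := hqhigh B hBm
      calc (m : ℝ) * q B ≤ (m : ℝ) * ((k : ℝ) * p ((B + 1) * k - 1)) :=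
            mul_le_mul_of_nonneg_left h1 (by positivity)
        _ = (M : ℝ) * p ((B + 1) * k - 1) := by rw [hMr]; ring
        _ ≤ x := hjS.2
    rw [hTeq, mem_range] at hBT
    omega
  -- finish
  rw [hSsum, hTsum]
  have hMpos : (0 : ℝ) < M := by exact_mod_cast hM0
  have hmpos : (0 : ℝ) < m := by exact_mod_cast hm
  have hkpos : (0 : ℝ) < k := by exact_mod_cast hk
  have key : |(A : ℝ) - (k : ℝ) * B| ≤ 2 * k := by
    rw [abs_le]
    have h1 : ((k * B : ℕ) : ℝ) ≤ ((A + k : ℕ) : ℝ) := by exact_mod_cast hkBA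
    have h2 : ((A : ℕ) : ℝ) ≤ ((k * B + k : ℕ) : ℝ) := by exact_mod_cast hAkB
    push_cast at h1 h2
    constructor <;> linarith
  have heq : 1 / (M : ℝ) * A - 1 / (m : ℝ) * B = ((A : ℝ) - (k : ℝ) * B) / M := by
    rw [hMr]; field_simp
  rw [heq, abs_div, abs_of_pos hMpos]
  gcongr
end

section
/- Let F_m be a distribution function supported on [0, c] with mean 1 (∫ z dF_m(z) = 1). Then for all real t and all n large enough (so that the remainder bounds apply), |∫ exp((n/m) z (e^{itm/n} − 1)) dF_m(z) − ∫ e^{itz} dF_m(z)| ≤ (1/2)(m/n) t² + (2/3)(m/n)² |t|³. -/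
/-!
With `s = m/n`, the exponents `(z/s)(e^{its} - 1)` and `itz` both lie in the closed left
half-plane when `z ≥ 0`, where `exp` is 1-Lipschitz. Their difference is
`(z/s)(e^{its} - 1 - its)`, of modulus at most `(z/s)(ts)²/2 = t² s z / 2`. Integrating this
pointwise bound against a distribution on `[0, ∞)` of mean 1 gives `t² s / 2`.
-/

open MeasureTheory Filter Complex ComplexConjugate

namespace Complex

theorem norm_exp_sub_exp_le_of_re_nonpos {a b : ℂ} (ha : a.re ≤ 0) (hb : b.re ≤ 0) :
    ‖exp a - exp b‖ ≤ ‖a - b‖ := by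
  have hderiv : ∀ z ∈ {z : ℂ | z.re ≤ 0}, HasDerivWithinAt exp (exp z) {z | z.re ≤ 0} z :=
    fun z _ => (hasDerivAt_exp z).hasDerivWithinAt
  have hbound : ∀ z ∈ {z : ℂ | z.re ≤ 0}, ‖exp z‖ ≤ 1 := fun z hz => by
    rw [norm_exp]; exact Real.exp_le_one_iff.2 hz
  simpa using (convex_halfSpace_re_le 0).norm_image_sub_le_of_norm_hasDerivWithin_le
    hderiv hbound hb ha

theorem hasDerivAt_exp_I_mul_ofReal_sub_one_sub (y : ℝ) :
    HasDerivAt (fun x : ℝ => exp (I * x) - 1 - I * x) (I * (exp (I * y) - 1)) y := by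
  have h : HasDerivAt (fun z : ℂ => exp (I * z) - 1 - I * z) (exp (I * y) * (I * 1) - I * 1) y :=
    ((((hasDerivAt_id _).const_mul I).cexp.sub_const 1).sub ((hasDerivAt_id _).const_mul I))
  exact h.comp_ofReal.congr_deriv (by ring)

theorem norm_exp_I_mul_ofReal_sub_one_sub_le_of_nonneg {x : ℝ} (hx : 0 ≤ x) :
    ‖exp (I * x) - 1 - I * x‖ ≤ x ^ 2 / 2 := by
  have hB (y : ℝ) : HasDerivAt (fun y : ℝ => y ^ 2 / 2) y y := by
    simpa using ((hasDerivAt_pow 2 y).div_const 2)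
  refine image_norm_le_of_norm_deriv_right_le_deriv_boundary (a := 0) (b := x)
    (fun y _ => (hasDerivAt_exp_I_mul_ofReal_sub_one_sub y).continuousAt.continuousWithinAt)
    (fun y _ => (hasDerivAt_exp_I_mul_ofReal_sub_one_sub y).hasDerivWithinAt)
    (by simp) hB (fun y hy => ?_) ⟨hx, le_rfl⟩
  rw [norm_mul, norm_I, one_mul]
  simpa [abs_of_nonneg hy.1] using Real.norm_exp_I_mul_ofReal_sub_one_le (x := y)

theorem norm_exp_I_mul_ofReal_sub_one_sub_le (x : ℝ) :
    ‖exp (I * x) - 1 - I * x‖ ≤ x ^ 2 / 2 := by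
  rcases le_total 0 x with hx | hx
  · exact norm_exp_I_mul_ofReal_sub_one_sub_le_of_nonneg hx
  · have hconj : exp (I * x) - 1 - I * x = conj (exp (I * ↑(-x)) - 1 - I * ↑(-x)) := by
      simp only [ofReal_neg, mul_neg, sub_neg_eq_add, map_add, map_sub, ← exp_conj, map_neg,
        map_mul, conj_I, conj_ofReal, neg_mul, neg_neg, map_one]
      ring
    rw [hconj, RCLike.norm_conj, ← neg_sq]
    exact norm_exp_I_mul_ofReal_sub_one_sub_le_of_nonneg (neg_nonneg.2 hx)

theorem re_ofReal_mul_exp_I_mul_ofReal_sub_one_nonpos {a : ℝ} (ha : 0 ≤ a) (x : ℝ) :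
    ((a : ℂ) * (exp (I * x) - 1)).re ≤ 0 := by
  rw [re_ofReal_mul, mul_comm I, sub_re, exp_ofReal_mul_I_re, one_re]
  exact mul_nonpos_of_nonneg_of_nonpos ha (by linarith [Real.cos_le_one x])

end Complex

/-- The characteristic function at `t` of `s • Poisson(z / s)`. -/
noncomputable def scaledPoissonCharFun (s z t : ℝ) : ℂ :=
  exp ((s⁻¹ : ℝ) * z * (exp (I * t * s) - 1))

theorem scaledPoissonCharFun_eq (s z t : ℝ) :
    scaledPoissonCharFun s z t = exp (((s⁻¹ * z : ℝ) : ℂ) * (exp (I * ↑(t * s)) - 1)) := by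
  rw [scaledPoissonCharFun]; push_cast; ring_nf

theorem norm_scaledPoissonCharFun_le_one {s z : ℝ} (hs : 0 ≤ s) (hz : 0 ≤ z) (t : ℝ) :
    ‖scaledPoissonCharFun s z t‖ ≤ 1 := by
  rw [scaledPoissonCharFun_eq, norm_exp, Real.exp_le_one_iff]
  exact re_ofReal_mul_exp_I_mul_ofReal_sub_one_nonpos (by positivity) _

theorem norm_scaledPoissonCharFun_sub_exp_le {s z : ℝ} (hs : 0 < s) (hz : 0 ≤ z) (t : ℝ) :
    ‖scaledPoissonCharFun s z t - exp (I * t * z)‖ ≤ t ^ 2 * s / 2 * z := by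
  have hdiff : ((s⁻¹ * z : ℝ) : ℂ) * (exp (I * ↑(t * s)) - 1) - I * t * z
      = ((s⁻¹ * z : ℝ) : ℂ) * (exp (I * ↑(t * s)) - 1 - I * ↑(t * s)) := by
    have : (s : ℂ) ≠ 0 := ofReal_ne_zero.2 hs.ne'
    push_cast; field_simp
  rw [scaledPoissonCharFun_eq]
  calc _ ≤ ‖((s⁻¹ * z : ℝ) : ℂ) * (exp (I * ↑(t * s)) - 1) - I * t * z‖ :=
        norm_exp_sub_exp_le_of_re_nonpos
          (re_ofReal_mul_exp_I_mul_ofReal_sub_one_nonpos (by positivity) _) (by simp)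
    _ ≤ s⁻¹ * z * ((t * s) ^ 2 / 2) := by
        rw [hdiff, norm_mul, norm_real, Real.norm_of_nonneg (by positivity)]
        gcongr
        exact norm_exp_I_mul_ofReal_sub_one_sub_le _
    _ = t ^ 2 * s / 2 * z := by field_simp

theorem norm_integral_scaledPoissonCharFun_sub_integral_exp_le {μ : Measure ℝ}
    [IsFiniteMeasure μ] (hμ : ∀ᵐ z ∂μ, 0 ≤ z) (hint : Integrable id μ) {s : ℝ} (hs : 0 < s)
    (t : ℝ) :
    ‖∫ z, scaledPoissonCharFun s z t ∂μ - ∫ z, exp (I * t * z) ∂μ‖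
      ≤ t ^ 2 * s / 2 * ∫ z, z ∂μ := by
  have hpoisson : Integrable (fun z => scaledPoissonCharFun s z t) μ := by
    refine Integrable.mono' (integrable_const 1) (by unfold scaledPoissonCharFun; fun_prop) ?_
    filter_upwards [hμ] with z hz using norm_scaledPoissonCharFun_le_one hs.le hz t
  have hchar : Integrable (fun z : ℝ => exp (I * t * z)) μ := by
    refine Integrable.mono' (integrable_const 1) (by fun_prop) (ae_of_all _ fun z => ?_)
    simp [norm_exp]
  rw [← integral_sub hpoisson hchar, ← integral_const_mul]
  refine (norm_integral_le_integral_norm _).trans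
    (integral_mono_ae (hpoisson.sub hchar).norm (hint.const_mul _) ?_)
  filter_upwards [hμ] with z hz using norm_scaledPoissonCharFun_sub_exp_le hs hz t

theorem charFun_difference_bound_general
    (c : ℝ)
    (P : ℕ → ProbabilityMeasure ℝ)
    (hsupp : ∀ k, (P k : Measure ℝ) (Set.Icc (0 : ℝ) c) = 1)
    (hmean : ∀ k, ∫ z, z ∂(P k : Measure ℝ) = 1)
    (m n : ℕ → ℝ) (hmn : ∀ k, 0 < m k ∧ m k < n k)
    (t : ℝ) :
    ∀ᶠ k in atTop,
      ‖∫ z, Complex.exp ((n k / m k : ℝ) * z *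
            (Complex.exp (Complex.I * t * (m k / n k : ℝ)) - 1)) ∂(P k : Measure ℝ) -
          ∫ z, Complex.exp (Complex.I * t * z) ∂(P k : Measure ℝ)‖ ≤
        (1 / 2) * (m k / n k) * t ^ 2 + (2 / 3) * (m k / n k) ^ 2 * |t| ^ 3 := by
  refine Eventually.of_forall fun k => ?_
  have hs : 0 < m k / n k := div_pos (hmn k).1 ((hmn k).1.trans (hmn k).2)
  have hnonneg : ∀ᵐ z ∂(P k : Measure ℝ), 0 ≤ z :=
    ((ae_iff_measure_eq measurableSet_Icc.nullMeasurableSet).2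
      (by rw [measure_univ]; exact hsupp k)).mono fun _ hz => hz.1
  have hint : Integrable id (P k : Measure ℝ) := .of_integral_ne_zero (by simp [hmean k])
  -- after this rewrite the first integrand is `scaledPoissonCharFun (m k / n k) z t` by definition
  rw [← inv_div (m k)]
  refine (norm_integral_scaledPoissonCharFun_sub_integral_exp_le hnonneg hint hs t).trans ?_
  rw [hmean k]
  nlinarith [show 0 ≤ (m k / n k) ^ 2 * |t| ^ 3 by positivity]

/-- For distribution functions `F_m` supported on `[0, c]` with mean 1, and
`m_k/n_k → 0` with `0 < m_k < n_k`, eventually (for `n` large enough)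
`|∫ exp((n/m) z (e^{itm/n} − 1)) dF_m(z) − ∫ e^{itz} dF_m(z)|
  ≤ (1/2)(m/n) t² + (2/3)(m/n)² |t|³`. -/
theorem charFun_difference_bound
    (c : ℝ) (hc : 0 < c)
    (P : ℕ → ProbabilityMeasure ℝ)
    (hsupp : ∀ k, (P k : Measure ℝ) (Set.Icc (0 : ℝ) c) = 1)
    (hmean : ∀ k, ∫ z, z ∂(P k : Measure ℝ) = 1)
    (m n : ℕ → ℝ) (hmn : ∀ k, 0 < m k ∧ m k < n k)
    (hratio : Tendsto (fun k => m k / n k) atTop (nhds 0)) (t : ℝ) :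
    ∀ᶠ k in atTop,
      ‖∫ z, Complex.exp ((n k / m k : ℝ) * z *
            (Complex.exp (Complex.I * t * (m k / n k : ℝ)) - 1)) ∂(P k : Measure ℝ) -
          ∫ z, Complex.exp (Complex.I * t * z) ∂(P k : Measure ℝ)‖ ≤
        (1 / 2) * (m k / n k) * t ^ 2 + (2 / 3) * (m k / n k) ^ 2 * |t| ^ 3 :=
  charFun_difference_bound_general c P hsupp hmean m n hmn t
end
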